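/- Let H be an infinite-dimensional separable complex Hilbert space, let p ∈ (1,∞] and q ∈ [1,∞) be conjugate exponents, let C ∈ B^p(H), and let (e_n) be any orthonormal system in H. Then (1/n^{1/q}) Σ_{k=1}^n ⟨e_k, C e_k⟩ → 0 as n → ∞. -/

import Mathlib

open scoped ComplexInnerProductSpace ENNReal
open Filter

noncomputable section

universe u v

noncomputable def sv {X : Type u} {Y : Type v} [NormedAddCommGroup X] [InnerProductSpace ℂ X]
    [NormedAddCommGroup Y] [InnerProductSpace ℂ Y] (C : X →L[ℂ] Y) (n : ℕ) : ℝ :=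
  ⨅ F : {F : X →L[ℂ] Y // Module.rank ℂ (LinearMap.range (F : X →ₗ[ℂ] Y)) ≤ n},
    ‖C - (F : X →L[ℂ] Y)‖

def MemSchatten {X : Type u} {Y : Type v} [NormedAddCommGroup X] [InnerProductSpace ℂ X]
    [NormedAddCommGroup Y] [InnerProductSpace ℂ Y] (p : ℝ≥0∞) (C : X →L[ℂ] Y) : Prop :=
  IsCompactOperator C ∧ (p ≠ ∞ → Summable (fun n => sv C n ^ p.toReal))

noncomputable def schattenNorm {X : Type u} {Y : Type v} [NormedAddCommGroup X]
    [InnerProductSpace ℂ X] [NormedAddCommGroup Y] [InnerProductSpace ℂ Y]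
    (p : ℝ≥0∞) (C : X →L[ℂ] Y) : ℝ :=
  if p = ∞ then ‖C‖ else (∑' n, sv C n ^ p.toReal) ^ (1 / p.toReal)

def IsTraceOf {Y : Type v} [NormedAddCommGroup Y] [InnerProductSpace ℂ Y] [CompleteSpace Y]
    (A : Y →L[ℂ] Y) (z : ℂ) : Prop :=
  ∀ (ι : Type v) (b : HilbertBasis ι ℂ Y), HasSum (fun i => ⟪b i, A (b i)⟫) z

/-!
Write `sₖ` for the approximation numbers of `C`. Pick near-best approximants `Gⱼ` of rank at most
`2^(j+1)` and telescope `C = (C - G_M) + G₀ + ∑_{j<M} (Gⱼ₊₁ - Gⱼ)` with `2^M < n ≤ 2^(M+1)`. The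
diagonal sum `A ↦ ∑_{k<n} ⟪eₖ, A eₖ⟫` is at most `n ‖A‖` on the first piece and at most
`rank A · ‖A‖` on the others; by Cauchy condensation this gives the Ky Fan type bound
`‖∑_{k<n} ⟪eₖ, C eₖ⟫‖ ≤ 4 ‖C‖ + 28 + 13 ∑_{k<n} sₖ`. It remains to see `n^(-1/q) ∑_{k<n} sₖ → 0`:
for `p < ∞` by Hölder's inequality on the tails of `∑ sₖ^p`, and for `p = ∞` (so `q = 1`) by
Cesàro, since `sₖ → 0` for a compact operator.
-/

open Finset Topology

theorem Orthonormal.norm_sum_inner_smul_le {𝕜 E ι : Type*} [RCLike 𝕜] [NormedAddCommGroup E]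
    [InnerProductSpace 𝕜 E] {v : ι → E} (hv : Orthonormal 𝕜 v) (s : Finset ι) (x : E) :
    ‖∑ i ∈ s, inner 𝕜 (v i) x • v i‖ ≤ ‖x‖ := by
  refine le_of_pow_le_pow_left₀ two_ne_zero (norm_nonneg x) ?_
  calc ‖∑ i ∈ s, inner 𝕜 (v i) x • v i‖ ^ 2 = ∑ i ∈ s, ‖inner 𝕜 (v i) x‖ ^ 2 :=
        hv.orthogonalFamily.norm_sum (fun i => inner 𝕜 (v i) x) s
    _ ≤ ‖x‖ ^ 2 := hv.sum_inner_products_le x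

theorem LinearMap.rank_sub_le {K V V' : Type*} [DivisionRing K] [AddCommGroup V] [Module K V]
    [AddCommGroup V'] [Module K V'] (f g : V →ₗ[K] V') : rank (f - g) ≤ rank f + rank g := by
  rw [sub_eq_add_neg]
  refine (rank_add_le f (-g)).trans ?_
  unfold LinearMap.rank
  rw [LinearMap.range_neg]

section ApproximationNumbers

variable {X Y : Type*} [NormedAddCommGroup X] [InnerProductSpace ℂ X]
  [NormedAddCommGroup Y] [InnerProductSpace ℂ Y] (C : X →L[ℂ] Y)

theorem sv_nonneg (n : ℕ) : 0 ≤ sv C n :=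
  Real.iInf_nonneg fun _ => norm_nonneg _

theorem sv_le {n : ℕ} (F : X →L[ℂ] Y) (hF : (F : X →ₗ[ℂ] Y).rank ≤ n) : sv C n ≤ ‖C - F‖ :=
  ciInf_le (f := fun F : {F : X →L[ℂ] Y // (F : X →ₗ[ℂ] Y).rank ≤ n} => ‖C - F‖)
    ⟨0, by rintro _ ⟨F, rfl⟩; exact norm_nonneg _⟩ ⟨F, hF⟩

theorem sv_le_norm (n : ℕ) : sv C n ≤ ‖C‖ := by
  simpa using sv_le C 0 (by simp)

theorem sv_antitone : Antitone (sv C) := by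
  intro m n hmn
  have : Nonempty {F : X →L[ℂ] Y // (F : X →ₗ[ℂ] Y).rank ≤ m} := ⟨⟨0, by simp⟩⟩
  exact le_ciInf fun F => sv_le C F.1 (F.2.trans (by exact_mod_cast hmn))

theorem exists_rank_le_norm_sub_lt (n : ℕ) {ε : ℝ} (hε : 0 < ε) :
    ∃ F : X →L[ℂ] Y, (F : X →ₗ[ℂ] Y).rank ≤ n ∧ ‖C - F‖ < sv C n + ε := by
  have : Nonempty {F : X →L[ℂ] Y // (F : X →ₗ[ℂ] Y).rank ≤ n} := ⟨⟨0, by simp⟩⟩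
  obtain ⟨F, hF⟩ := exists_lt_of_ciInf_lt (lt_add_of_pos_right (sv C n) hε)
  exact ⟨F.1, F.2, hF⟩

theorem IsCompactOperator.exists_rank_le_norm_sub_le {C : X →L[ℂ] Y} (hC : IsCompactOperator C)
    {ε : ℝ} (hε : 0 < ε) :
    ∃ (N : ℕ) (F : X →L[ℂ] Y), (F : X →ₗ[ℂ] Y).rank ≤ N ∧ ‖C - F‖ ≤ ε := by
  obtain ⟨K, hK, hCK⟩ := hC.image_closedBall_subset_compact 1
  obtain ⟨t, ht, hcover⟩ := Metric.totallyBounded_iff.1 (hK.totallyBounded.subset hCK) ε hε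
  set V := Submodule.span ℂ t
  have : FiniteDimensional ℂ V := FiniteDimensional.span_of_finite ℂ ht
  refine ⟨Module.finrank ℂ V, V.starProjection ∘L C, ?_, ?_⟩
  · rw [Module.finrank_eq_rank]
    refine Submodule.rank_mono ?_
    rintro _ ⟨x, rfl⟩
    exact V.starProjection_apply_mem _
  · refine ContinuousLinearMap.opNorm_le_of_unit_norm hε.le fun x hx => ?_
    obtain ⟨y, hy, hCy⟩ : ∃ y ∈ t, C x ∈ Metric.ball y ε := by
      simpa using hcover ⟨x, by simp [hx], rfl⟩
    have hV : ‖C x - V.starProjection (C x)‖ ≤ ‖C x - y‖ := by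
      rw [Submodule.starProjection_minimal]
      exact ciInf_le ⟨0, Set.forall_mem_range.mpr fun _ => norm_nonneg _⟩
        (⟨y, Submodule.subset_span hy⟩ : V)
    exact hV.trans (mem_ball_iff_norm.1 hCy).le

theorem IsCompactOperator.tendsto_sv {C : X →L[ℂ] Y} (hC : IsCompactOperator C) :
    Tendsto (sv C) atTop (𝓝 0) := by
  refine tendsto_order.2 ⟨fun a ha => Eventually.of_forall fun n => ha.trans_le (sv_nonneg C n),
    fun ε hε => ?_⟩
  obtain ⟨N, F, hF, hCF⟩ := hC.exists_rank_le_norm_sub_le (half_pos hε)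
  filter_upwards [eventually_ge_atTop N] with n hn
  exact ((sv_antitone C hn).trans ((sv_le C F hF).trans hCF)).trans_lt (half_lt_self hε)

end ApproximationNumbers

section DyadicApproximation

variable {X Y : Type*} [NormedAddCommGroup X] [InnerProductSpace ℂ X]
  [NormedAddCommGroup Y] [InnerProductSpace ℂ Y]

/-- The slack `(1/4)^j` stays summable after multiplication by the rank `~ 2^j` of `Gⱼ₊₁ - Gⱼ`. -/
def IsDyadicApprox (C : X →L[ℂ] Y) (G : ℕ → X →L[ℂ] Y) : Prop :=
  ∀ j, (G j : X →ₗ[ℂ] Y).rank ≤ (2 ^ (j + 1) : ℕ) ∧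
    ‖C - G j‖ ≤ sv C (2 ^ (j + 1)) + (1 / 4 : ℝ) ^ j

theorem exists_isDyadicApprox (C : X →L[ℂ] Y) : ∃ G, IsDyadicApprox C G := by
  choose G hG using fun j : ℕ =>
    exists_rank_le_norm_sub_lt C (2 ^ (j + 1)) (by positivity : (0 : ℝ) < (1 / 4) ^ j)
  exact ⟨G, fun j => ⟨(hG j).1, (hG j).2.le⟩⟩

namespace IsDyadicApprox

variable {C : X →L[ℂ] Y} {G : ℕ → X →L[ℂ] Y} (hG : IsDyadicApprox C G)
include hG

theorem rank_succ_sub_le (j : ℕ) :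
    ((G (j + 1) - G j : X →L[ℂ] Y) : X →ₗ[ℂ] Y).rank ≤ (6 * 2 ^ j : ℕ) := by
  rw [ContinuousLinearMap.toLinearMap_sub]
  refine (LinearMap.rank_sub_le _ _).trans ((add_le_add (hG (j + 1)).1 (hG j).1).trans ?_)
  exact_mod_cast le_of_eq (by ring)

theorem norm_succ_sub_le (j : ℕ) :
    ‖G (j + 1) - G j‖ ≤ 2 * sv C (2 ^ (j + 1)) + 2 * (1 / 4 : ℝ) ^ j := by
  have hsv : sv C (2 ^ (j + 2)) ≤ sv C (2 ^ (j + 1)) :=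
    sv_antitone C (Nat.pow_le_pow_right two_pos (Nat.le_succ _))
  have hgeom : (1 / 4 : ℝ) ^ (j + 1) ≤ (1 / 4) ^ j :=
    pow_le_pow_of_le_one (by norm_num) (by norm_num) (Nat.le_succ j)
  calc ‖G (j + 1) - G j‖ = ‖(C - G j) - (C - G (j + 1))‖ := by rw [sub_sub_sub_cancel_left]
    _ ≤ ‖C - G j‖ + ‖C - G (j + 1)‖ := norm_sub_le _ _
    _ ≤ _ := by linarith [(hG j).2, (hG (j + 1)).2]

variable {E : Type*} [SeminormedAddCommGroup E] (τ : (X →L[ℂ] Y) →+ E)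

theorem norm_map_sub_le {n : ℕ} (hτ : ∀ A, ‖τ A‖ ≤ n * ‖A‖) {M : ℕ} (hn : n ≤ 2 ^ (M + 1)) :
    ‖τ (C - G M)‖ ≤ ∑ k ∈ range n, sv C k + 2 := by
  have hsv : n * sv C (2 ^ (M + 1)) ≤ ∑ k ∈ range n, sv C k := by
    simpa using card_nsmul_le_sum (range n) (sv C) _ fun k hk =>
      sv_antitone C ((mem_range.1 hk).le.trans hn)
  have hgeom : (n : ℝ) * (1 / 4) ^ M ≤ 2 := by
    calc (n : ℝ) * (1 / 4) ^ M ≤ 2 ^ (M + 1) * (1 / 4) ^ M := by gcongr; exact_mod_cast hn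
      _ = 2 * (1 / 2) ^ M := by rw [pow_succ, mul_comm _ (2 : ℝ), mul_assoc, ← mul_pow]; norm_num
      _ ≤ 2 := by
        have : (1 / 2 : ℝ) ^ M ≤ 1 := pow_le_one₀ (by norm_num) (by norm_num)
        linarith
  calc ‖τ (C - G M)‖ ≤ n * ‖C - G M‖ := hτ _
    _ ≤ n * (sv C (2 ^ (M + 1)) + (1 / 4) ^ M) := by gcongr; exact (hG M).2
    _ ≤ ∑ k ∈ range n, sv C k + 2 := by rw [mul_add]; linarith

variable (hτ : ∀ (m : ℕ) (F : X →L[ℂ] Y), (F : X →ₗ[ℂ] Y).rank ≤ m → ‖τ F‖ ≤ m * ‖F‖)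
include hτ

theorem norm_map_zero_le : ‖τ (G 0)‖ ≤ 4 * ‖C‖ + 2 := by
  have h₁ : ‖G 0‖ ≤ ‖C‖ + ‖C - G 0‖ := by simpa using norm_sub_le C (C - G 0)
  have h₂ : ‖C - G 0‖ ≤ ‖C‖ + 1 := by
    simpa using (hG 0).2.trans (by simpa using sv_le_norm C 2)
  calc ‖τ (G 0)‖ ≤ 2 * ‖G 0‖ := by exact_mod_cast hτ 2 (G 0) (by simpa using (hG 0).1)
    _ ≤ 4 * ‖C‖ + 2 := by linarith

theorem norm_map_succ_sub_le (j : ℕ) :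
    ‖τ (G (j + 1) - G j)‖ ≤ 12 * (2 ^ j * sv C (2 ^ (j + 1))) + 12 * (1 / 2 : ℝ) ^ j := by
  calc ‖τ (G (j + 1) - G j)‖ ≤ (6 * 2 ^ j : ℕ) * ‖G (j + 1) - G j‖ :=
        hτ _ _ (hG.rank_succ_sub_le j)
    _ ≤ (6 * 2 ^ j : ℕ) * (2 * sv C (2 ^ (j + 1)) + 2 * (1 / 4 : ℝ) ^ j) := by
        gcongr; exact hG.norm_succ_sub_le j
    _ = 12 * (2 ^ j * sv C (2 ^ (j + 1))) + 12 * (2 ^ j * (1 / 4 : ℝ) ^ j) := by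
        push_cast; ring
    _ = _ := by rw [← mul_pow]; norm_num

theorem norm_map_sum_succ_sub_le {n M : ℕ} (hM : 2 ^ M < n) :
    ‖τ (∑ j ∈ range M, (G (j + 1) - G j))‖ ≤ 12 * ∑ k ∈ range n, sv C k + 24 := by
  have hcondensed : ∑ j ∈ range M, 2 ^ j * sv C (2 ^ (j + 1)) ≤ ∑ k ∈ range n, sv C k := by
    calc ∑ j ∈ range M, 2 ^ j * sv C (2 ^ (j + 1))
        ≤ ∑ k ∈ Ico 2 (2 ^ M + 1), sv C k := by
          simpa using sum_condensed_le' (fun _ _ _ hmn => sv_antitone C hmn) M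
      _ ≤ ∑ k ∈ range n, sv C k := by
          refine sum_le_sum_of_subset_of_nonneg (fun k hk => ?_) fun k _ _ => sv_nonneg C k
          simp only [mem_Ico, mem_range] at hk ⊢
          omega
  calc ‖τ (∑ j ∈ range M, (G (j + 1) - G j))‖ ≤ ∑ j ∈ range M, ‖τ (G (j + 1) - G j)‖ := by
        rw [map_sum]; exact norm_sum_le _ _
    _ ≤ ∑ j ∈ range M, (12 * (2 ^ j * sv C (2 ^ (j + 1))) + 12 * (1 / 2 : ℝ) ^ j) :=
        sum_le_sum fun j _ => hG.norm_map_succ_sub_le τ hτ j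
    _ ≤ _ := by
        rw [sum_add_distrib, ← mul_sum, ← mul_sum]
        linarith [sum_geometric_two_le M]

end IsDyadicApprox

theorem norm_map_le_sum_sv {E : Type*} [SeminormedAddCommGroup E] (τ : (X →L[ℂ] Y) →+ E)
    {n : ℕ} (hn : 2 ≤ n) (hτ : ∀ A, ‖τ A‖ ≤ n * ‖A‖)
    (hτ_rank : ∀ (m : ℕ) (F : X →L[ℂ] Y), (F : X →ₗ[ℂ] Y).rank ≤ m → ‖τ F‖ ≤ m * ‖F‖)
    (C : X →L[ℂ] Y) :
    ‖τ C‖ ≤ 4 * ‖C‖ + 28 + 13 * ∑ k ∈ range n, sv C k := by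
  obtain ⟨G, hG⟩ := exists_isDyadicApprox C
  obtain ⟨M, hM, hn'⟩ : ∃ M, 2 ^ M < n ∧ n ≤ 2 ^ (M + 1) :=
    ⟨Nat.log 2 (n - 1), by have := Nat.pow_log_le_self 2 (by omega : n - 1 ≠ 0); omega,
      by have := Nat.lt_pow_succ_log_self one_lt_two (n - 1); omega⟩
  have hsplit : τ C = τ (C - G M) + τ (G 0) + τ (∑ j ∈ range M, (G (j + 1) - G j)) := by
    rw [← map_add, ← map_add, sum_range_sub]
    congr 1
    abel
  rw [hsplit]
  linarith [norm_add₃_le (a := τ (C - G M)) (b := τ (G 0))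
      (c := τ (∑ j ∈ range M, (G (j + 1) - G j))),
    hG.norm_map_sub_le τ hτ hn', hG.norm_map_zero_le τ hτ_rank,
    hG.norm_map_sum_succ_sub_le τ hτ_rank hM]

end DyadicApproximation

section DiagonalSum

variable {H : Type*} [NormedAddCommGroup H] [InnerProductSpace ℂ H]

def diagSum (e : ℕ → H) (n : ℕ) : (H →L[ℂ] H) →+ ℂ where
  toFun A := ∑ k ∈ range n, ⟪e k, A (e k)⟫
  map_zero' := by simp
  map_add' A B := by simp [sum_add_distrib]

@[simp]
theorem diagSum_apply (e : ℕ → H) (n : ℕ) (A : H →L[ℂ] H) :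
    diagSum e n A = ∑ k ∈ range n, ⟪e k, A (e k)⟫ := rfl

variable {e : ℕ → H} (he : Orthonormal ℂ e) (n : ℕ)
include he

theorem norm_diagSum_le (A : H →L[ℂ] H) : ‖diagSum e n A‖ ≤ n * ‖A‖ := by
  have hterm (k : ℕ) : ‖⟪e k, A (e k)⟫‖ ≤ ‖A‖ := by
    simpa [he.norm_eq_one] using (norm_inner_le_norm (e k) (A (e k))).trans
      (mul_le_mul_of_nonneg_left (A.le_opNorm (e k)) (norm_nonneg _))
  simpa using norm_sum_le_of_le (range n) fun k _ => hterm k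

theorem norm_diagSum_le_of_rank_le {m : ℕ} (F : H →L[ℂ] H) (hF : (F : H →ₗ[ℂ] H).rank ≤ m) :
    ‖diagSum e n F‖ ≤ m * ‖F‖ := by
  set V := LinearMap.range (F : H →ₗ[ℂ] H)
  have : FiniteDimensional ℂ V :=
    Module.rank_lt_aleph0_iff.mp (hF.trans_lt Cardinal.natCast_lt_aleph0)
  let b := stdOrthonormalBasis ℂ V
  have hexpand (x : H) : F x = ∑ j, ⟪(b j : H), F x⟫ • (b j : H) := by
    simpa using congrArg V.subtype (b.sum_repr' ⟨F x, LinearMap.mem_range_self _ x⟩).symm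
  -- expanding `F eₖ` in the basis `b` of its range moves the sum over `k` inside `F`
  have hdiag : diagSum e n F =
      ∑ j, ⟪(b j : H), F (∑ k ∈ range n, ⟪e k, (b j : H)⟫ • e k)⟫ := by
    rw [diagSum_apply]
    conv_lhs => enter [2, k]; rw [hexpand (e k)]
    simp only [map_sum, map_smul, inner_sum, inner_smul_right]
    rw [sum_comm]
    exact sum_congr rfl fun j _ => sum_congr rfl fun k _ => mul_comm _ _
  have hterm (j) : ‖⟪(b j : H), F (∑ k ∈ range n, ⟪e k, (b j : H)⟫ • e k)⟫‖ ≤ ‖F‖ := by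
    have hbj : ‖(b j : H)‖ = 1 := b.orthonormal.norm_eq_one j
    calc _ ≤ ‖(b j : H)‖ * (‖F‖ * ‖∑ k ∈ range n, ⟪e k, (b j : H)⟫ • e k‖) :=
          (norm_inner_le_norm _ _).trans
            (mul_le_mul_of_nonneg_left (F.le_opNorm _) (norm_nonneg _))
      _ ≤ 1 * (‖F‖ * 1) := by
          rw [hbj]
          gcongr
          exact hbj ▸ he.norm_sum_inner_smul_le (range n) _
      _ = ‖F‖ := by ring
  calc ‖diagSum e n F‖ ≤ ∑ _j : Fin (Module.finrank ℂ V), ‖F‖ :=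
        hdiag ▸ norm_sum_le_of_le _ fun j _ => hterm j
    _ = Module.finrank ℂ V * ‖F‖ := by simp
    _ ≤ m * ‖F‖ := by
        gcongr
        exact_mod_cast Module.finrank_le_of_rank_le hF

end DiagonalSum

theorem tendsto_inv_rpow_natCast_atTop {r : ℝ} (hr : 0 < r) :
    Tendsto (fun n : ℕ => ((n : ℝ) ^ r)⁻¹) atTop (𝓝 0) :=
  ((tendsto_rpow_atTop hr).comp tendsto_natCast_atTop_atTop).inv_tendsto_atTop

section Holder

variable {a : ℕ → ℝ} (ha : ∀ k, 0 ≤ a k) {p q : ℝ} (hpq : p.HolderConjugate q)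
  (hsum : Summable fun k => a k ^ p)
include ha hpq hsum

theorem sum_Ico_le_tsum_rpow_mul_rpow (N n : ℕ) :
    ∑ k ∈ Ico N n, a k ≤ (∑' k, a (k + N) ^ p) ^ (1 / p) * (n : ℝ) ^ (1 / q) := by
  have hHolder := Real.inner_le_Lp_mul_Lq_of_nonneg (Ico N n) hpq (f := a) (g := 1)
    (fun k _ => ha k) (fun _ _ => zero_le_one)
  simp only [Pi.one_apply, mul_one, Real.one_rpow, sum_const, Nat.card_Ico,
    nsmul_eq_mul] at hHolder
  refine hHolder.trans (mul_le_mul ?_ ?_ (by positivity)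
    (Real.rpow_nonneg (tsum_nonneg fun k => Real.rpow_nonneg (ha _) _) _))
  · refine Real.rpow_le_rpow (sum_nonneg fun k _ => by have := ha k; positivity) ?_
      (one_div_nonneg.2 hpq.nonneg)
    rw [sum_Ico_eq_sum_range]
    simpa only [add_comm N] using ((summable_nat_add_iff N).2 hsum).sum_le_tsum (range (n - N))
      fun k _ => by have := ha (k + N); positivity
  · exact Real.rpow_le_rpow (by positivity) (by simp) (one_div_nonneg.2 hpq.symm.nonneg)

theorem tendsto_inv_rpow_mul_sum_of_summable_rpow :
    Tendsto (fun n : ℕ => ((n : ℝ) ^ (1 / q))⁻¹ * ∑ k ∈ range n, a k) atTop (𝓝 0) := by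
  have hq : 0 < 1 / q := one_div_pos.2 hpq.symm.pos
  have htail : Tendsto (fun N => (∑' k, a (k + N) ^ p) ^ (1 / p)) atTop (𝓝 0) := by
    simpa [Real.zero_rpow (inv_pos.2 hpq.pos).ne'] using
      (tendsto_sum_nat_add fun k => a k ^ p).rpow_const (Or.inr (one_div_nonneg.2 hpq.nonneg))
  refine tendsto_order.2 ⟨fun b hb => Eventually.of_forall fun n => hb.trans_le
    (mul_nonneg (by positivity) (sum_nonneg fun k _ => ha k)), fun ε hε => ?_⟩
  obtain ⟨N, hN⟩ := (htail.eventually (gt_mem_nhds (half_pos hε))).exists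
  have hhead : Tendsto (fun n : ℕ => ((n : ℝ) ^ (1 / q))⁻¹ * ∑ k ∈ range N, a k)
      atTop (𝓝 0) := by
    simpa using (tendsto_inv_rpow_natCast_atTop hq).mul_const (∑ k ∈ range N, a k)
  filter_upwards [hhead.eventually (gt_mem_nhds (half_pos hε)), eventually_ge_atTop N,
    eventually_ge_atTop 1] with n hhead_n hNn hn
  have hpos : 0 < (n : ℝ) ^ (1 / q) := by positivity
  have hbody : ((n : ℝ) ^ (1 / q))⁻¹ * ∑ k ∈ Ico N n, a k ≤ ε / 2 := by
    rw [inv_mul_le_iff₀ hpos]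
    exact (sum_Ico_le_tsum_rpow_mul_rpow ha hpq hsum N n).trans (by nlinarith)
  calc ((n : ℝ) ^ (1 / q))⁻¹ * ∑ k ∈ range n, a k
      = ((n : ℝ) ^ (1 / q))⁻¹ * ∑ k ∈ range N, a k
        + ((n : ℝ) ^ (1 / q))⁻¹ * ∑ k ∈ Ico N n, a k := by
        rw [← sum_range_add_sum_Ico a hNn, mul_add]
    _ < ε / 2 + ε / 2 := add_lt_add_of_lt_of_le hhead_n hbody
    _ = ε := add_halves ε

end Holder

theorem MemSchatten.tendsto_inv_rpow_mul_sum_sv {X Y : Type*} [NormedAddCommGroup X]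
    [InnerProductSpace ℂ X] [NormedAddCommGroup Y] [InnerProductSpace ℂ Y] {p q : ℝ≥0∞}
    [p.HolderConjugate q] (hp : 1 < p) {C : X →L[ℂ] Y} (hC : MemSchatten p C) :
    Tendsto (fun n : ℕ => ((n : ℝ) ^ (1 / q.toReal))⁻¹ * ∑ k ∈ range n, sv C k)
      atTop (𝓝 0) := by
  by_cases hp_top : p = ∞
  · have hq : q = 1 := (ENNReal.HolderConjugate.eq_top_iff_eq_one p q).1 hp_top
    simpa [hq] using hC.1.tendsto_sv.cesaro
  · have hp' : 1 < p.toReal := by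
      simpa using (ENNReal.toReal_lt_toReal ENNReal.one_ne_top hp_top).2 hp
    exact tendsto_inv_rpow_mul_sum_of_summable_rpow (sv_nonneg C)
      (ENNReal.HolderConjugate.toReal hp') (hC.2 hp_top)

theorem stmt17_general {H : Type u} [NormedAddCommGroup H] [InnerProductSpace ℂ H]
    (p q : ℝ≥0∞) (hp : 1 < p) (hpq : 1 / p + 1 / q = 1)
    (C : H →L[ℂ] H) (hC : MemSchatten p C)
    (e : ℕ → H) (he : Orthonormal ℂ e) :
    Filter.Tendsto
      (fun n : ℕ => (((n : ℝ) ^ (1 / q.toReal))⁻¹ : ℝ) •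
        ∑ k ∈ Finset.range n, (⟪e k, C (e k)⟫ : ℂ))
      Filter.atTop (nhds 0) := by
  have : p.HolderConjugate q := ENNReal.holderConjugate_iff.2 (by simpa only [one_div] using hpq)
  have hq_pos : 0 < 1 / q.toReal := one_div_pos.2 <| ENNReal.toReal_pos
    (ENNReal.HolderConjugate.ne_zero q p) ((ENNReal.HolderConjugate.lt_top_iff_one_lt q p).2 hp).ne
  have hbound : ∀ᶠ n in atTop, ‖∑ k ∈ range n, ⟪e k, C (e k)⟫‖ ≤
      4 * ‖C‖ + 28 + 13 * ∑ k ∈ range n, sv C k := by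
    filter_upwards [eventually_ge_atTop 2] with n hn
    exact norm_map_le_sum_sv (diagSum e n) hn (norm_diagSum_le he n)
      (fun m F hF => norm_diagSum_le_of_rank_le he n F hF) C
  have hlim : Tendsto (fun n : ℕ => ((n : ℝ) ^ (1 / q.toReal))⁻¹ *
      (4 * ‖C‖ + 28 + 13 * ∑ k ∈ range n, sv C k)) atTop (𝓝 0) := by
    simpa [mul_add, mul_left_comm] using
      ((tendsto_inv_rpow_natCast_atTop hq_pos).mul_const (4 * ‖C‖ + 28)).add
        ((hC.tendsto_inv_rpow_mul_sum_sv hp).const_mul 13)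
  refine squeeze_zero_norm' ?_ hlim
  filter_upwards [hbound] with n hn
  rw [norm_smul, Real.norm_of_nonneg (by positivity)]
  exact mul_le_mul_of_nonneg_left hn (by positivity)

/-- For `C` in the Schatten-`p` class with `p ∈ (1,∞]`, `q ∈ [1,∞)` conjugate, and any
orthonormal system `(e_n)`, one has `(1/n^{1/q}) ∑_{k=1}^n ⟨e_k, C e_k⟩ → 0`. -/
theorem stmt17 {H : Type u} [NormedAddCommGroup H] [InnerProductSpace ℂ H] [CompleteSpace H]
    [TopologicalSpace.SeparableSpace H] (hH : ¬ FiniteDimensional ℂ H)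
    (p q : ℝ≥0∞) (hp : 1 < p) (hq : 1 ≤ q) (hq' : q ≠ ∞) (hpq : 1 / p + 1 / q = 1)
    (C : H →L[ℂ] H) (hC : MemSchatten p C)
    (e : ℕ → H) (he : Orthonormal ℂ e) :
    Filter.Tendsto
      (fun n : ℕ => (((n : ℝ) ^ (1 / q.toReal))⁻¹ : ℝ) •
        ∑ k ∈ Finset.range n, (⟪e k, C (e k)⟫ : ℂ))
      Filter.atTop (nhds 0) :=
  stmt17_general p q hp hpq C hC e he

end
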